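/- arXiv:1910.05076 — 4 statements merged into one kernel-verified Lean document; each statement's English description precedes it below -/
import Mathlib

section
/- (Nested Gaps Principle) Let q ≥ 2 be an integer and let f(z) = Σ_{n∈ℕ} a_n zⁿ and g(z) = Σ_{n∈ℕ} b_n zⁿ be ½-functions. Suppose that for every H > 0 there are positive integers K₁ ≤ K₂ < K′, indices n′ ≤ n₁ < n₂ in ℕ and real numbers E, E′ > 0 such that: (i) n₁ + K₁ < n₂ and n₂ + K₂ ≤ n′ + K′; (ii) n₁ and n₂ are mild gap points for f with gap-length ≥ K₁ and K₁-tail-norm ≤ E, and n′ is a mild gap point for g with gap-length ≥ K′ and K′-tail-norm ≤ E′; (iii) Σ_{n=n₁}^{n₂−1} a_n q^{−n} ≠ 0; (iv) q^{K₁} > H·E and q^{K₂} > H·E′. Then either g(1/q) = 0, or f(1/q) and g(1/q) are linearly independent over ℚ. -/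
/-- `a` is the coefficient sequence of a `½`-function: a power series with
integer coefficients that converges absolutely for all `|z| ≤ 1/2`. -/
def IsHalfFunction (a : ℕ → ℤ) : Prop :=
  Summable (fun n : ℕ => |(a n : ℝ)| * (1 / 2 : ℝ) ^ n)

/-- `n` is a mild gap point for the series with coefficients `a`, with
gap-length `≥ K` and `K`-tail-norm `≤ E`. -/
def IsMildGapPoint (a : ℕ → ℤ) (K : ℕ) (E : ℝ) (n : ℕ) : Prop :=
  (∀ k < K, a (n + k) = 0) ∧
    ∑' i : ℕ, |(a (n + K + i) : ℝ)| * (1 / 2 : ℝ) ^ i ≤ E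

/-- The value `f(1/q)` of the `½`-function with coefficients `a`. -/
noncomputable def halfFunValue (a : ℕ → ℤ) (q : ℕ) : ℝ :=
  ∑' n : ℕ, (a n : ℝ) / (q : ℝ) ^ n

lemma half_summable {q : ℕ} (hq : 2 ≤ q) {a : ℕ → ℤ} (ha : IsHalfFunction a) :
    Summable (fun n : ℕ => (a n : ℝ) / (q : ℝ) ^ n) := by
  have hq2 : (2:ℝ) ≤ (q:ℝ) := by exact_mod_cast hq
  apply Summable.of_norm_bounded (g := fun n : ℕ => |(a n : ℝ)| * (1 / 2 : ℝ) ^ n) ha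
  intro n
  rw [Real.norm_eq_abs, abs_div, abs_pow, Nat.abs_cast]
  have h2 : (0:ℝ) < 2 ^ n := by positivity
  have hle : (2:ℝ) ^ n ≤ (q:ℝ) ^ n := pow_le_pow_left₀ (by norm_num) hq2 n
  calc |(a n : ℝ)| / (q:ℝ) ^ n ≤ |(a n : ℝ)| / 2 ^ n :=
        div_le_div_of_nonneg_left (abs_nonneg _) h2 hle |>.trans_eq rfl
    _ = |(a n : ℝ)| * (1/2) ^ n := by rw [one_div, inv_pow, div_eq_mul_inv]

/-- the tail of `f(1/q)` from index `m`. -/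
noncomputable def halfTail (a : ℕ → ℤ) (q m : ℕ) : ℝ :=
  ∑' i : ℕ, (a (i + m) : ℝ) / (q : ℝ) ^ (i + m)

lemma half_split {q : ℕ} (hq : 2 ≤ q) {a : ℕ → ℤ} (ha : IsHalfFunction a) (m : ℕ) :
    halfFunValue a q
      = (∑ n ∈ Finset.range m, (a n : ℝ) / (q : ℝ) ^ n) + halfTail a q m :=
  (Summable.sum_add_tsum_nat_add m (half_summable hq ha)).symm

set_option maxHeartbeats 1000000 in
lemma half_tail_bound {q : ℕ} (hq : 2 ≤ q) {a : ℕ → ℤ} (ha : IsHalfFunction a)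
    {K : ℕ} {E : ℝ} {m : ℕ} (h : IsMildGapPoint a K E m) :
    |halfTail a q m| ≤ E / (q : ℝ) ^ (m + K) := by
  have hq2 : (2:ℝ) ≤ (q:ℝ) := by exact_mod_cast hq
  have hq0 : (0:ℝ) < (q:ℝ) := lt_of_lt_of_le two_pos hq2
  have hs : Summable (fun n : ℕ => (a n : ℝ) / (q : ℝ) ^ n) := half_summable hq ha
  have hs' : Summable (fun i : ℕ => (a (i + m) : ℝ) / (q : ℝ) ^ (i + m)) :=
    (summable_nat_add_iff m).2 hs
  -- tail-norm sequence is summable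
  have hg : Summable (fun i : ℕ => |(a (m + K + i) : ℝ)| * (1 / 2 : ℝ) ^ i) := by
    have h1 : Summable (fun i : ℕ => |(a (i + (m + K)) : ℝ)| * (1 / 2 : ℝ) ^ (i + (m + K))) :=
      (summable_nat_add_iff (m + K)).2 ha
    have h2 := h1.mul_right ((2:ℝ) ^ (m + K))
    apply h2.congr
    intro i
    have : ((1:ℝ)/2) ^ (i + (m + K)) * 2 ^ (m + K) = (1/2) ^ i := by
      rw [pow_add]
      field_simp
      rw [← mul_pow]; norm_num
    rw [mul_assoc, this, add_comm i (m + K)]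
  -- rewrite tail dropping the K zero coefficients
  have hzero : ∑ i ∈ Finset.range K, (a (i + m) : ℝ) / (q : ℝ) ^ (i + m) = 0 := by
    apply Finset.sum_eq_zero
    intro i hi
    have := h.1 i (Finset.mem_range.mp hi)
    rw [add_comm i m, this]
    simp
  have hsplit := Summable.sum_add_tsum_nat_add K hs'
  have htail_eq : halfTail a q m = ∑' i : ℕ, (a (i + K + m) : ℝ) / (q : ℝ) ^ (i + K + m) := by
    unfold halfTail
    rw [← hsplit, hzero, zero_add]
  rw [htail_eq]
  have hterm : ∀ i : ℕ, ‖(a (i + K + m) : ℝ) / (q : ℝ) ^ (i + K + m)‖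
      ≤ (|(a (m + K + i) : ℝ)| * (1 / 2 : ℝ) ^ i) / (q : ℝ) ^ (m + K) := by
    intro i
    have hidx : i + K + m = m + K + i := by omega
    rw [hidx, Real.norm_eq_abs, abs_div, abs_pow, Nat.abs_cast, pow_add]
    rw [div_le_div_iff₀ (by positivity) (by positivity)]
    have hple : (q:ℝ) ^ (m + K) * ((1:ℝ)) ≤ (q:ℝ)^(m+K) * 1 := le_refl _
    have h2i : (2:ℝ) ^ i ≤ (q:ℝ) ^ i := pow_le_pow_left₀ (by norm_num) hq2 i
    have : |(a (m + K + i) : ℝ)| * (1/2)^i * ((q:ℝ)^(m+K) * (q:ℝ)^i)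
        = |(a (m + K + i) : ℝ)| * ((q:ℝ)^i * (1/2)^i) * (q:ℝ)^(m+K) := by ring
    rw [this]
    apply mul_le_mul_of_nonneg_right _ (by positivity)
    have : (1:ℝ) ≤ (q:ℝ)^i * (1/2)^i := by
      rw [one_div, inv_pow, ← div_eq_mul_inv, le_div_iff₀ (by positivity), one_mul]
      exact h2i
    nlinarith [abs_nonneg ((a (m + K + i) : ℝ))]
  have hgs : Summable (fun i : ℕ => (|(a (m + K + i) : ℝ)| * (1 / 2 : ℝ) ^ i) / (q : ℝ) ^ (m + K)) :=
    hg.div_const _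
  calc |∑' i : ℕ, (a (i + K + m) : ℝ) / (q : ℝ) ^ (i + K + m)|
      ≤ ∑' i : ℕ, (|(a (m + K + i) : ℝ)| * (1 / 2 : ℝ) ^ i) / (q : ℝ) ^ (m + K) := by
        rw [← Real.norm_eq_abs]
        exact norm_tsum_le_tsum_norm (by
          apply hgs.of_nonneg_of_le (fun i => norm_nonneg _) hterm) |>.trans
          (Summable.tsum_le_tsum hterm (by
            apply hgs.of_nonneg_of_le (fun i => norm_nonneg _) hterm) hgs)
    _ = (∑' i : ℕ, |(a (m + K + i) : ℝ)| * (1 / 2 : ℝ) ^ i) / (q : ℝ) ^ (m + K) :=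
        tsum_div_const
    _ ≤ E / (q : ℝ) ^ (m + K) := by
        gcongr
        exact h.2

/-- integer combination step -/
lemma int_combo_zero {q : ℕ} (hq : 2 ≤ q) {a b : ℕ → ℤ}
    (c d : ℤ) (m : ℕ) (x y εa εb : ℝ)
    (hx : x = (∑ n ∈ Finset.range m, (a n : ℝ) / (q : ℝ) ^ n) + halfTail a q m)
    (hy : y = (∑ n ∈ Finset.range m, (b n : ℝ) / (q : ℝ) ^ n) + halfTail b q m)
    (hcd : (c : ℝ) * x + (d : ℝ) * y = 0)
    (hta : |halfTail a q m| ≤ εa) (htb : |halfTail b q m| ≤ εb)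
    (hsmall : (|c| : ℝ) * (εa * (q : ℝ) ^ m) + (|d| : ℝ) * (εb * (q : ℝ) ^ m) < 1) :
    (c : ℝ) * (∑ n ∈ Finset.range m, (a n : ℝ) / (q : ℝ) ^ n)
      + (d : ℝ) * (∑ n ∈ Finset.range m, (b n : ℝ) / (q : ℝ) ^ n) = 0 := by
  have hq2 : (2:ℝ) ≤ (q:ℝ) := by exact_mod_cast hq
  have hq0 : (0:ℝ) < (q:ℝ) := lt_of_lt_of_le two_pos hq2
  set A := ∑ n ∈ Finset.range m, (a n : ℝ) / (q:ℝ)^n with hA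
  set B := ∑ n ∈ Finset.range m, (b n : ℝ) / (q:ℝ)^n with hB
  have hZcast : ∀ f : ℕ → ℤ, ((∑ n ∈ Finset.range m, f n * (q:ℤ)^(m-n) : ℤ) : ℝ)
      = (q:ℝ)^m * (∑ n ∈ Finset.range m, (f n : ℝ) / (q:ℝ)^n) := by
    intro f
    push_cast
    rw [Finset.mul_sum]
    apply Finset.sum_congr rfl
    intro n hn
    have hn' : n ≤ m := le_of_lt (Finset.mem_range.mp hn)
    rw [pow_sub₀ ((q:ℝ)) (ne_of_gt hq0) hn', div_eq_mul_inv]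
    ring
  set Z : ℤ := c * (∑ n ∈ Finset.range m, a n * (q:ℤ)^(m-n))
      + d * (∑ n ∈ Finset.range m, b n * (q:ℤ)^(m-n)) with hZdef
  have hZR : (Z:ℝ) = (q:ℝ)^m * ((c:ℝ) * A + (d:ℝ) * B) := by
    rw [hZdef, Int.cast_add, Int.cast_mul, Int.cast_mul, hZcast a, hZcast b, ← hA, ← hB]
    ring
  have key : (c:ℝ)*A + (d:ℝ)*B = -((c:ℝ)*halfTail a q m + (d:ℝ)*halfTail b q m) := by
    have h := hcd
    rw [hx, hy] at h
    linear_combination h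
  have hsmall' : |(c:ℝ)| * (εa * (q:ℝ)^m) + |(d:ℝ)| * (εb * (q:ℝ)^m) < 1 := by
    exact_mod_cast hsmall
  have habs : |(Z:ℝ)| < 1 := by
    have h1 : |(c:ℝ)*halfTail a q m + (d:ℝ)*halfTail b q m|
        ≤ |(c:ℝ)| * εa + |(d:ℝ)| * εb := by
      have h2 := abs_add_le ((c:ℝ)*halfTail a q m) ((d:ℝ)*halfTail b q m)
      rw [abs_mul, abs_mul] at h2
      nlinarith [abs_nonneg ((c:ℝ)), abs_nonneg ((d:ℝ)),
        abs_nonneg (halfTail a q m), abs_nonneg (halfTail b q m)]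
    calc |(Z:ℝ)| = (q:ℝ)^m * |(c:ℝ)*halfTail a q m + (d:ℝ)*halfTail b q m| := by
          rw [hZR, key, abs_mul, abs_neg, abs_of_pos (pow_pos hq0 m)]
      _ ≤ (q:ℝ)^m * (|(c:ℝ)| * εa + |(d:ℝ)| * εb) :=
          mul_le_mul_of_nonneg_left h1 (le_of_lt (pow_pos hq0 m))
      _ = |(c:ℝ)| * (εa * (q:ℝ)^m) + |(d:ℝ)| * (εb * (q:ℝ)^m) := by ring
      _ < 1 := hsmall'
  have hZ0 : Z = 0 := by
    have h3 : |Z| < 1 := by exact_mod_cast habs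
    rw [Int.abs_lt_one_iff] at h3
    exact h3
  have h0 : (q:ℝ)^m * ((c:ℝ) * A + (d:ℝ) * B) = 0 := by
    rw [← hZR, hZ0]
    simp
  rcases mul_eq_zero.mp h0 with h | h
  · exact absurd h (ne_of_gt (pow_pos hq0 m))
  · exact h

/-- **Nested Gaps Principle**. -/
theorem nested_gaps_principle (q : ℕ) (hq : 2 ≤ q) (a b : ℕ → ℤ)
    (ha : IsHalfFunction a) (hb : IsHalfFunction b)
    (hyp : ∀ H : ℝ, 0 < H →
      ∃ K₁ K₂ K' : ℕ, 0 < K₁ ∧ K₁ ≤ K₂ ∧ K₂ < K' ∧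
      ∃ n' n₁ n₂ : ℕ, n' ≤ n₁ ∧ n₁ < n₂ ∧
      ∃ E E' : ℝ, 0 < E ∧ 0 < E' ∧
        (n₁ + K₁ < n₂ ∧ n₂ + K₂ ≤ n' + K') ∧
        (IsMildGapPoint a K₁ E n₁ ∧ IsMildGapPoint a K₁ E n₂ ∧
          IsMildGapPoint b K' E' n') ∧
        (∑ n ∈ Finset.Ico n₁ n₂, (a n : ℝ) / (q : ℝ) ^ n ≠ 0) ∧
        ((q : ℝ) ^ K₁ > H * E ∧ (q : ℝ) ^ K₂ > H * E')) :
    halfFunValue b q = 0 ∨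
      LinearIndependent ℚ ![halfFunValue a q, halfFunValue b q] := by

  by_cases hg : halfFunValue b q = 0
  · exact Or.inl hg
  right
  rw [LinearIndependent.pair_iff]
  intro s t hst
  have hq2 : (2:ℝ) ≤ (q:ℝ) := by exact_mod_cast hq
  have hq0 : (0:ℝ) < (q:ℝ) := lt_of_lt_of_le two_pos hq2
  have hq1 : (1:ℝ) ≤ (q:ℝ) := by linarith
  set x := halfFunValue a q with hxdef
  set y := halfFunValue b q with hydef
  have hst' : (s:ℝ) * x + (t:ℝ) * y = 0 := by
    have h := hst
    rw [Rat.smul_def, Rat.smul_def] at h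
    exact h
  set c : ℤ := s.num * t.den with hcdef
  set d : ℤ := t.num * s.den with hddef
  have hsd : ((s.den:ℝ)) ≠ 0 := Nat.cast_ne_zero.mpr s.den_nz
  have htd : ((t.den:ℝ)) ≠ 0 := Nat.cast_ne_zero.mpr t.den_nz
  have hs : (s.num:ℝ) = (s:ℝ) * (s.den:ℝ) := by
    rw [Rat.cast_def]; field_simp
  have ht : (t.num:ℝ) = (t:ℝ) * (t.den:ℝ) := by
    rw [Rat.cast_def]; field_simp
  have hcd : (c:ℝ) * x + (d:ℝ) * y = 0 := by
    rw [hcdef, hddef]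
    push_cast
    linear_combination ((s.den:ℝ) * (t.den:ℝ)) * hst' + ((t.den:ℝ) * x) * hs
      + ((s.den:ℝ) * y) * ht
  set H : ℝ := 2 * (|(c:ℝ)| + |(d:ℝ)|) + 1 with hHdef
  have hH0 : 0 < H := by positivity
  obtain ⟨K₁, K₂, K', hK₁, hK12, hK2', n', n₁, n₂, hn'1, hn12, E, E', hE, hE',
    ⟨hlt1, hle2⟩, ⟨hga1, hga2, hgb⟩, hsum_ne, hqK1, hqK2⟩ := hyp H hH0
  -- b vanishes on [n', n' + K')
  have hbz : ∀ n, n' ≤ n → n < n' + K' → b n = 0 := by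
    intro n h1 h2
    have h3 := hgb.1 (n - n') (by omega)
    have hn : n' + (n - n') = n := by omega
    rwa [hn] at h3
  have hn2le : n₂ ≤ n' + K' := by omega
  have hn1le : n₁ ≤ n' + K' := by omega
  -- partial sums of b agree with the one at n'
  have hBsum : ∀ m, n' ≤ m → m ≤ n' + K' →
      ∑ n ∈ Finset.range m, (b n:ℝ)/(q:ℝ)^n
        = ∑ n ∈ Finset.range n', (b n:ℝ)/(q:ℝ)^n := by
    intro m h1 h2
    rw [← Finset.sum_range_add_sum_Ico _ h1]
    have hz : ∑ n ∈ Finset.Ico n' m, (b n:ℝ)/(q:ℝ)^n = 0 := by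
      apply Finset.sum_eq_zero
      intro n hn
      rw [hbz n (Finset.mem_Ico.mp hn).1 (lt_of_lt_of_le (Finset.mem_Ico.mp hn).2 h2)]
      simp
    rw [hz, add_zero]
  have hsplitb : ∀ m, y = (∑ n ∈ Finset.range m, (b n:ℝ)/(q:ℝ)^n) + halfTail b q m :=
    fun m => half_split hq hb m
  have hTb : ∀ m, n' ≤ m → m ≤ n' + K' → halfTail b q m = halfTail b q n' := by
    intro m h1 h2
    have e1 := hsplitb m
    have e2 := hsplitb n'
    rw [hBsum m h1 h2] at e1
    linarith
  have hTb_bound : |halfTail b q n'| ≤ E' / (q:ℝ)^(n' + K') := half_tail_bound hq hb hgb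
  have hTa1 : |halfTail a q n₁| ≤ E / (q:ℝ)^(n₁ + K₁) := half_tail_bound hq ha hga1
  have hTa2 : |halfTail a q n₂| ≤ E / (q:ℝ)^(n₂ + K₁) := half_tail_bound hq ha hga2
  -- the key smallness bound
  have hEsmall : |(c:ℝ)| * (E/(q:ℝ)^K₁) + |(d:ℝ)| * (E'/(q:ℝ)^K₂) < 1 := by
    have hu : H * (E/(q:ℝ)^K₁) < 1 := by
      rw [← mul_div_assoc, div_lt_one (by positivity)]
      exact hqK1
    have hv : H * (E'/(q:ℝ)^K₂) < 1 := by
      rw [← mul_div_assoc, div_lt_one (by positivity)]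
      exact hqK2
    have hu0 : (0:ℝ) ≤ E/(q:ℝ)^K₁ := by positivity
    have hv0 : (0:ℝ) ≤ E'/(q:ℝ)^K₂ := by positivity
    have h1 : |(c:ℝ)| * (H * (E/(q:ℝ)^K₁)) ≤ |(c:ℝ)| * 1 :=
      mul_le_mul_of_nonneg_left hu.le (abs_nonneg _)
    have h2 : |(d:ℝ)| * (H * (E'/(q:ℝ)^K₂)) ≤ |(d:ℝ)| * 1 :=
      mul_le_mul_of_nonneg_left hv.le (abs_nonneg _)
    nlinarith [abs_nonneg ((c:ℝ)), abs_nonneg ((d:ℝ)),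
      mul_nonneg (abs_nonneg ((c:ℝ))) hu0, mul_nonneg (abs_nonneg ((d:ℝ))) hv0]
  -- smallness at a point m with m ≤ n' + K' and m + K₂ ≤ n' + K'
  have hsmall_gen : ∀ m : ℕ, m + K₂ ≤ n' + K' →
      |(c:ℝ)| * ((E/(q:ℝ)^(m + K₁)) * (q:ℝ)^m)
        + |(d:ℝ)| * ((E'/(q:ℝ)^(n' + K')) * (q:ℝ)^m) < 1 := by
    intro m hm
    have e1 : (E/(q:ℝ)^(m + K₁)) * (q:ℝ)^m = E/(q:ℝ)^K₁ := by
      rw [pow_add]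
      field_simp
    have e2 : (E'/(q:ℝ)^(n' + K')) * (q:ℝ)^m ≤ E'/(q:ℝ)^K₂ := by
      rw [div_mul_eq_mul_div, div_le_div_iff₀ (by positivity) (by positivity)]
      calc E' * (q:ℝ)^m * (q:ℝ)^K₂ = E' * (q:ℝ)^(m + K₂) := by rw [pow_add]; ring
        _ ≤ E' * (q:ℝ)^(n' + K') := by
            apply mul_le_mul_of_nonneg_left (pow_le_pow_right₀ hq1 hm) hE'.le
    calc |(c:ℝ)| * ((E/(q:ℝ)^(m + K₁)) * (q:ℝ)^m)
          + |(d:ℝ)| * ((E'/(q:ℝ)^(n' + K')) * (q:ℝ)^m)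
        ≤ |(c:ℝ)| * (E/(q:ℝ)^K₁) + |(d:ℝ)| * (E'/(q:ℝ)^K₂) := by
          rw [e1]
          exact add_le_add le_rfl (mul_le_mul_of_nonneg_left e2 (abs_nonneg _))
      _ < 1 := hEsmall
  -- apply the integer-combination lemma at n₁ and at n₂
  have eq1 : (c:ℝ) * (∑ n ∈ Finset.range n₁, (a n:ℝ)/(q:ℝ)^n)
      + (d:ℝ) * (∑ n ∈ Finset.range n₁, (b n:ℝ)/(q:ℝ)^n) = 0 := by
    apply int_combo_zero hq c d n₁ x y (E/(q:ℝ)^(n₁ + K₁)) (E'/(q:ℝ)^(n' + K'))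
      (half_split hq ha n₁) (hsplitb n₁) hcd hTa1
      (by rw [hTb n₁ hn'1 hn1le]; exact hTb_bound)
    exact hsmall_gen n₁ (by omega)
  have eq2 : (c:ℝ) * (∑ n ∈ Finset.range n₂, (a n:ℝ)/(q:ℝ)^n)
      + (d:ℝ) * (∑ n ∈ Finset.range n₂, (b n:ℝ)/(q:ℝ)^n) = 0 := by
    apply int_combo_zero hq c d n₂ x y (E/(q:ℝ)^(n₂ + K₁)) (E'/(q:ℝ)^(n' + K'))
      (half_split hq ha n₂) (hsplitb n₂) hcd hTa2
      (by rw [hTb n₂ (by omega) hn2le]; exact hTb_bound)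
    exact hsmall_gen n₂ hle2
  -- subtract
  have hBB : ∑ n ∈ Finset.range n₂, (b n:ℝ)/(q:ℝ)^n
      = ∑ n ∈ Finset.range n₁, (b n:ℝ)/(q:ℝ)^n := by
    rw [hBsum n₂ (by omega) hn2le, hBsum n₁ hn'1 hn1le]
  have hcz : (c:ℝ) * (∑ n ∈ Finset.Ico n₁ n₂, (a n:ℝ)/(q:ℝ)^n) = 0 := by
    rw [Finset.sum_Ico_eq_sub _ hn12.le]
    rw [hBB] at eq2
    linear_combination eq2 - eq1
  have hc0 : (c:ℝ) = 0 := by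
    rcases mul_eq_zero.mp hcz with h | h
    · exact h
    · exact absurd h hsum_ne
  have hd0 : (d:ℝ) = 0 := by
    have hdy : (d:ℝ) * y = 0 := by
      rw [hc0] at hcd
      linarith
    rcases mul_eq_zero.mp hdy with h | h
    · exact h
    · exact absurd h hg
  have hcZ : c = 0 := by exact_mod_cast hc0
  have hdZ : d = 0 := by exact_mod_cast hd0
  constructor
  · have : s.num = 0 := by
      rcases mul_eq_zero.mp hcZ with h | h
      · exact h
      · exact absurd h (by exact_mod_cast t.den_nz)
    exact Rat.num_eq_zero.mp this
  · have : t.num = 0 := by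
      rcases mul_eq_zero.mp hdZ with h | h
      · exact h
      · exact absurd h (by exact_mod_cast s.den_nz)
    exact Rat.num_eq_zero.mp this
end

section
/- Let c > 0 and let (a_n)_{n∈ℕ} be a sequence of real numbers with |a_n| ≤ c(n+1) for all n ∈ ℕ. Let κ, n₀ ∈ ℕ₊ and N be such that n₀ + κ ≤ N and κ ≥ log₂ N. Suppose that for some E ≥ 8c one has |a_{n₀+i}| ≤ (3/2)ⁱ E for all 0 ≤ i < κ. Then Σ_{i=0}^∞ |a_{n₀+i}| 2^{−i} ≤ 5E. -/
/-!
Split the series at `κ`. On the first `κ` terms the hypothesis gives `|a_{n₀+i}| 2^{-i} ≤ (3/4)ⁱ E`,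
whose sum is below `4E`. Past `κ` only the linear growth bound is available; its contribution is
`2^{-κ}` times a series of size at most `c (2(n₀+κ) + 4)`, and `κ ≥ log₂ N` gives `2^κ ≥ n₀ + κ`,
which makes this at most `6c ≤ E`.
-/

open Finset

theorem hasSum_affine_mul_geometric {r : ℝ} (hr : ‖r‖ < 1) (x : ℝ) :
    HasSum (fun i : ℕ => (x + i) * r ^ i) (x / (1 - r) + r / (1 - r) ^ 2) := by
  simp_rw [add_mul]
  rw [div_eq_mul_inv x]
  exact ((hasSum_geometric_of_norm_lt_one hr).mul_left x).add
    (hasSum_coe_mul_geometric_of_norm_lt_one hr)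

theorem tsum_affine_mul_half_pow (x : ℝ) :
    ∑' i : ℕ, (x + i) * (1 / 2 : ℝ) ^ i = 2 * x + 2 := by
  rw [(hasSum_affine_mul_geometric (by norm_num) x).tsum_eq]
  ring

section LinearGrowth

variable {b : ℕ → ℝ} {c x : ℝ}

theorem summable_abs_mul_half_pow_of_abs_le_affine (hb : ∀ i : ℕ, |b i| ≤ c * (x + i)) :
    Summable fun i : ℕ => |b i| * (1 / 2 : ℝ) ^ i :=
  .of_nonneg_of_le (fun i => by positivity)
    (fun i => by rw [← mul_assoc]; exact mul_le_mul_of_nonneg_right (hb i) (by positivity))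
    ((hasSum_affine_mul_geometric (r := 1 / 2) (by norm_num) x).summable.mul_left c)

theorem tsum_abs_mul_half_pow_le_of_abs_le_affine (hb : ∀ i : ℕ, |b i| ≤ c * (x + i)) :
    ∑' i : ℕ, |b i| * (1 / 2 : ℝ) ^ i ≤ c * (2 * x + 2) := by
  rw [← tsum_affine_mul_half_pow, ← tsum_mul_left]
  refine (summable_abs_mul_half_pow_of_abs_le_affine hb).tsum_le_tsum (fun i => ?_)
    ((hasSum_affine_mul_geometric (r := 1 / 2) (by norm_num) x).summable.mul_left c)
  rw [← mul_assoc]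
  exact mul_le_mul_of_nonneg_right (hb i) (by positivity)

end LinearGrowth

theorem sum_range_abs_mul_half_pow_le {b : ℕ → ℝ} {E : ℝ} {k : ℕ} (hE : 0 ≤ E)
    (hb : ∀ i < k, |b i| ≤ (3 / 2 : ℝ) ^ i * E) :
    ∑ i ∈ range k, |b i| * (1 / 2 : ℝ) ^ i ≤ 4 * E :=
  calc ∑ i ∈ range k, |b i| * (1 / 2 : ℝ) ^ i
      ≤ ∑ i ∈ range k, (3 / 4 : ℝ) ^ i * E := by
        refine sum_le_sum fun i hi => ?_
        calc |b i| * (1 / 2 : ℝ) ^ i ≤ (3 / 2 : ℝ) ^ i * E * (1 / 2 : ℝ) ^ i :=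
              mul_le_mul_of_nonneg_right (hb i (mem_range.mp hi)) (by positivity)
          _ = (3 / 4 : ℝ) ^ i * E := by rw [mul_right_comm, ← mul_pow]; norm_num
    _ = (∑ i ∈ range k, (3 / 4 : ℝ) ^ i) * E := (sum_mul ..).symm
    _ ≤ 4 * E := by
        gcongr
        rw [range_eq_Ico]
        exact (geom_sum_Ico_le_of_lt_one (by norm_num) (by norm_num)).trans_eq (by norm_num)

theorem le_two_pow_of_le_of_logb_le {x N : ℝ} {k : ℕ} (hxN : x ≤ N)
    (hN : Real.logb 2 N ≤ k) : x ≤ 2 ^ k := by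
  rcases le_or_gt N 0 with hN0 | hN0
  · exact hxN.trans (hN0.trans (by positivity))
  · rw [← Real.rpow_natCast]
    exact hxN.trans ((Real.logb_le_iff_le_rpow (by norm_num) hN0).mp hN)

theorem mild_tail_bound_general (c : ℝ) (a : ℕ → ℝ)
    (ha : ∀ n : ℕ, |a n| ≤ c * ((n : ℝ) + 1))
    (κ n₀ : ℕ) (N : ℝ)
    (hn₀κN : (n₀ : ℝ) + (κ : ℝ) ≤ N) (hκN : Real.logb 2 N ≤ (κ : ℝ))
    (E : ℝ) (hE : 8 * c ≤ E)
    (hbound : ∀ i < κ, |a (n₀ + i)| ≤ (3 / 2 : ℝ) ^ i * E) :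
    ∑' i : ℕ, |a (n₀ + i)| * (1 / 2 : ℝ) ^ i ≤ 5 * E := by
  have hc : 0 ≤ c := by simpa using (abs_nonneg _).trans (ha 0)
  have hshift (m : ℕ) (i : ℕ) : |a (m + i)| ≤ c * ((m + 1 : ℝ) + i) := by
    simpa [add_right_comm] using ha (m + i)
  have hpow : (n₀ : ℝ) + κ ≤ 2 ^ κ := le_two_pow_of_le_of_logb_le hn₀κN hκN
  have head := sum_range_abs_mul_half_pow_le (by linarith) hbound
  have tail : ∑' i : ℕ, |a (n₀ + (i + κ))| * (1 / 2 : ℝ) ^ (i + κ)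
      = (∑' i : ℕ, |a (n₀ + κ + i)| * (1 / 2 : ℝ) ^ i) * (1 / 2 : ℝ) ^ κ := by
    rw [← tsum_mul_right]
    congr 1 with i
    rw [add_comm i, ← add_assoc, pow_add]
    ring
  have tail_le := tsum_abs_mul_half_pow_le_of_abs_le_affine (hshift (n₀ + κ))
  have tail_small : c * (2 * ((n₀ + κ : ℕ) + 1 : ℝ) + 2) * (1 / 2 : ℝ) ^ κ ≤ E := by
    rw [one_div_pow, mul_one_div, div_le_iff₀ (by positivity)]
    push_cast
    nlinarith [one_le_pow₀ (M₀ := ℝ) (a := 2) (n := κ) (by norm_num)]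
  rw [← (summable_abs_mul_half_pow_of_abs_le_affine (hshift n₀)).sum_add_tsum_nat_add κ, tail]
  have tail_scaled :=
    mul_le_mul_of_nonneg_right tail_le (pow_nonneg (one_div_nonneg.mpr zero_le_two) κ)
  linarith

/-- Mild tail bound: if `|a_n| ≤ c(n+1)` for all `n`, `n₀ + κ ≤ N`,
`κ ≥ log₂ N`, and `|a_{n₀+i}| ≤ (3/2)ⁱ E` for all `0 ≤ i < κ` with `E ≥ 8c`,
then `∑_{i=0}^∞ |a_{n₀+i}| 2^{-i} ≤ 5E`. -/
theorem mild_tail_bound (c : ℝ) (hc : 0 < c) (a : ℕ → ℝ)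
    (ha : ∀ n : ℕ, |a n| ≤ c * ((n : ℝ) + 1))
    (κ n₀ : ℕ) (hκ : 0 < κ) (hn₀ : 0 < n₀) (N : ℝ)
    (hn₀κN : (n₀ : ℝ) + (κ : ℝ) ≤ N) (hκN : Real.logb 2 N ≤ (κ : ℝ))
    (E : ℝ) (hE : 8 * c ≤ E)
    (hbound : ∀ i < κ, |a (n₀ + i)| ≤ (3 / 2 : ℝ) ^ i * E) :
    ∑' i : ℕ, |a (n₀ + i)| * (1 / 2 : ℝ) ^ i ≤ 5 * E :=
  mild_tail_bound_general c a ha κ n₀ N hn₀κN hκN E hE hbound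
end

section
/- Let ℓ ∈ {3,4} and let K, M, m ∈ ℕ with M ≥ 1 and m + K < M. Let ε₀,…,ε_K > 0 be real numbers such that r_{ℓ,ℓ}(m+k, M) ≤ ε_k M^{ℓ−1} for all 0 ≤ k ≤ K, and let E₀,…,E_K ∈ ℕ be such that α := ε₀/(E₀+1) + ⋯ + ε_K/(E_K+1) < 1. Then for each real N > 0 with N ≥ M^ℓ, the number of n ∈ ℕ with 0 ≤ n < N − K, n ≡ m (mod M), and r_{ℓ,ℓ}(n+k) ≤ E_k for all 0 ≤ k ≤ K, is at least ((1−α)/2^ℓ) · N/M. -/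
/-- `r ℓ s n` is the number of `s`-tuples `(n₁,…,n_s) ∈ ℕ^s` with
`n₁^ℓ + ⋯ + n_s^ℓ = n`. -/
noncomputable def r (ℓ s n : ℕ) : ℕ := Nat.card {v : Fin s → ℕ // ∑ i, (v i) ^ ℓ = n}

/-- `rmod ℓ m M` is the number of `ℓ`-tuples `(x₁,…,x_ℓ) ∈ (ℤ/MΖ)^ℓ` with
`x₁^ℓ + ⋯ + x_ℓ^ℓ ≡ m (mod M)`. -/
noncomputable def rmod (ℓ : ℕ) (m : ℤ) (M : ℕ) : ℕ :=
  Nat.card {x : Fin ℓ → ZMod M // ∑ i, (x i) ^ ℓ = (m : ZMod M)}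

lemma r_eq_card (ℓ B n : ℕ) (hℓ : ℓ ≠ 0) (hn : n < B ^ ℓ) :
    r ℓ ℓ n = ((Fintype.piFinset fun _ : Fin ℓ => Finset.range B).filter
      (fun v => ∑ i, (v i) ^ ℓ = n)).card := by
  rw [← Fintype.card_coe, ← Nat.card_eq_fintype_card]
  simp only [r]
  apply Nat.card_congr
  apply Equiv.subtypeEquivRight
  intro v
  simp only [Finset.mem_filter, Fintype.mem_piFinset, Finset.mem_range]
  constructor
  · intro h
    refine ⟨fun i => ?_, h⟩
    have h1 : (v i) ^ ℓ ≤ n :=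
      h ▸ Finset.single_le_sum (f := fun i => (v i) ^ ℓ) (fun _ _ => Nat.zero_le _)
        (Finset.mem_univ i)
    exact (Nat.pow_lt_pow_iff_left hℓ).mp (lt_of_le_of_lt h1 hn)
  · exact fun h => h.2

lemma rmod_eq_card (ℓ : ℕ) (c : ℤ) (M : ℕ) [NeZero M] :
    rmod ℓ c M = (Finset.univ.filter
      (fun x : Fin ℓ → ZMod M => ∑ i, (x i) ^ ℓ = (c : ZMod M))).card := by
  simp only [rmod]
  rw [Nat.card_eq_fintype_card, Fintype.card_subtype]

lemma key_count (ℓ Q M m k : ℕ) (hℓ : ℓ ≠ 0) (hM : 1 ≤ M) (hmk : m + k < M) :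
    ∑ t ∈ Finset.range (Q ^ ℓ * M ^ (ℓ - 1)), r ℓ ℓ (m + t * M + k)
      ≤ Q ^ ℓ * rmod ℓ ((m : ℤ) + (k : ℤ)) M := by
  haveI : NeZero M := ⟨by omega⟩
  set P := Q ^ ℓ * M ^ (ℓ - 1) with hP
  have hPM : P * M = (Q * M) ^ ℓ := by
    rw [hP, mul_pow, mul_assoc, ← pow_succ, Nat.sub_add_cancel (Nat.one_le_iff_ne_zero.mpr hℓ)]
  have hbound : ∀ t ∈ Finset.range P, m + t * M + k < (Q * M) ^ ℓ := by
    intro t ht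
    rw [Finset.mem_range] at ht
    calc m + t * M + k < t * M + M := by omega
    _ = (t + 1) * M := by ring
    _ ≤ P * M := Nat.mul_le_mul_right _ ht
    _ = (Q * M) ^ ℓ := hPM
  have hdisj : ∀ t₁ ∈ Finset.range P, ∀ t₂ ∈ Finset.range P, t₁ ≠ t₂ →
      Disjoint ((Fintype.piFinset fun _ : Fin ℓ => Finset.range (Q * M)).filter
        (fun v => ∑ i, (v i) ^ ℓ = m + t₁ * M + k))
        ((Fintype.piFinset fun _ : Fin ℓ => Finset.range (Q * M)).filter
        (fun v => ∑ i, (v i) ^ ℓ = m + t₂ * M + k)) := by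
    intro t₁ _ t₂ _ hne
    rw [Finset.disjoint_left]
    intro v h1 h2
    rw [Finset.mem_filter] at h1 h2
    have heq : m + t₁ * M + k = m + t₂ * M + k := by rw [← h1.2, h2.2]
    have : t₁ * M = t₂ * M := by omega
    exact hne (Nat.eq_of_mul_eq_mul_right (by omega) this)
  calc ∑ t ∈ Finset.range P, r ℓ ℓ (m + t * M + k)
      = ∑ t ∈ Finset.range P,
          ((Fintype.piFinset fun _ : Fin ℓ => Finset.range (Q * M)).filter
            (fun v => ∑ i, (v i) ^ ℓ = m + t * M + k)).card := by
        exact Finset.sum_congr rfl fun t ht => r_eq_card ℓ (Q * M) _ hℓ (hbound t ht)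
    _ = ((Finset.range P).biUnion fun t =>
          (Fintype.piFinset fun _ : Fin ℓ => Finset.range (Q * M)).filter
            (fun v => ∑ i, (v i) ^ ℓ = m + t * M + k)).card :=
        (Finset.card_biUnion hdisj).symm
    _ ≤ ((Fintype.piFinset fun _ : Fin ℓ => Finset.range (Q * M)).filter
          (fun v => ∑ i, ((v i : ZMod M)) ^ ℓ = (((m : ℤ) + (k : ℤ) : ℤ) : ZMod M))).card := by
        apply Finset.card_le_card
        intro v hv
        rw [Finset.mem_biUnion] at hv
        obtain ⟨t, _, hv⟩ := hv
        rw [Finset.mem_filter] at hv ⊢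
        refine ⟨hv.1, ?_⟩
        have h := congrArg (fun x : ℕ => (x : ZMod M)) hv.2
        push_cast at h
        rw [ZMod.natCast_self] at h
        push_cast
        rw [h]
        ring
    _ ≤ ((Fintype.piFinset fun _ : Fin ℓ => Finset.range Q) ×ˢ
          Finset.univ.filter (fun x : Fin ℓ → ZMod M =>
            ∑ i, (x i) ^ ℓ = (((m : ℤ) + (k : ℤ) : ℤ) : ZMod M))).card := by
        apply Finset.card_le_card_of_injOn
          (fun v => (fun i => v i / M, fun i => ((v i : ZMod M))))
        · intro v hv
          rw [Finset.mem_coe, Finset.mem_filter, Fintype.mem_piFinset] at hv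
          rw [Finset.mem_coe, Finset.mem_product]
          constructor
          · rw [Fintype.mem_piFinset]
            intro i
            rw [Finset.mem_range]
            have := hv.1 i
            rw [Finset.mem_range] at this
            rw [Nat.div_lt_iff_lt_mul (by omega)]
            omega
          · rw [Finset.mem_filter]
            exact ⟨Finset.mem_univ _, hv.2⟩
        · intro v _ w _ h
          have h1 := congrArg Prod.fst h
          have h2 := congrArg Prod.snd h
          simp only at h1 h2
          funext i
          have e1 : v i / M = w i / M := congrFun h1 i
          have e2 : (v i : ZMod M) = (w i : ZMod M) := congrFun h2 i
          have e3 : v i % M = w i % M := (ZMod.natCast_eq_natCast_iff _ _ _).mp e2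
          rw [← Nat.div_add_mod (v i) M, ← Nat.div_add_mod (w i) M, e1, e3]
    _ = Q ^ ℓ * rmod ℓ ((m : ℤ) + (k : ℤ)) M := by
        rw [Finset.card_product, Fintype.card_piFinset, rmod_eq_card]
        simp

/-- Maier matrix method: lower bound for the number of `n < N - K` with
`n ≡ m (mod M)` and `r_{ℓ,ℓ}(n+k) ≤ E_k` for all `0 ≤ k ≤ K`. -/
theorem maier (ℓ : ℕ) (hℓ : ℓ = 3 ∨ ℓ = 4) (K M m : ℕ) (hM : 1 ≤ M)
    (hmK : m + K < M) (ε : ℕ → ℝ) (hε : ∀ k ≤ K, 0 < ε k)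
    (hεr : ∀ k ≤ K, (rmod ℓ ((m : ℤ) + (k : ℤ)) M : ℝ) ≤ ε k * (M : ℝ) ^ (ℓ - 1))
    (E : ℕ → ℕ)
    (hα : ∑ k ∈ Finset.range (K + 1), ε k / ((E k : ℝ) + 1) < 1)
    (N : ℝ) (hN : 0 < N) (hNM : (M : ℝ) ^ ℓ ≤ N) :
    (1 - ∑ k ∈ Finset.range (K + 1), ε k / ((E k : ℝ) + 1)) / 2 ^ ℓ * (N / M) ≤
      (Nat.card {n : ℕ | (n : ℝ) < N - (K : ℝ) ∧ n ≡ m [MOD M] ∧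
        ∀ k ≤ K, r ℓ ℓ (n + k) ≤ E k} : ℝ) := by

  have hℓ0 : ℓ ≠ 0 := by rcases hℓ with h | h <;> omega
  have hℓ1 : 1 ≤ ℓ := Nat.one_le_iff_ne_zero.mpr hℓ0
  haveI : NeZero M := ⟨by omega⟩
  have hM0 : (0 : ℝ) < M := by exact_mod_cast hM
  -- choose Q
  set u : ℝ := N ^ ((ℓ : ℝ)⁻¹) with hu
  have hu0 : 0 < u := Real.rpow_pos_of_pos hN _
  have huℓ : u ^ ℓ = N := by
    rw [hu, ← Real.rpow_natCast (N ^ ((ℓ : ℝ)⁻¹)) ℓ, ← Real.rpow_mul hN.le,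
      inv_mul_cancel₀ (Nat.cast_ne_zero.mpr hℓ0), Real.rpow_one]
  have huM : (M : ℝ) ≤ u := by
    have h1 : (M : ℝ) ^ ℓ ≤ u ^ ℓ := by rw [huℓ]; exact hNM
    exact le_of_pow_le_pow_left₀ hℓ0 hu0.le h1
  set Q : ℕ := ⌊u / M⌋₊ with hQdef
  have hQ1 : 1 ≤ Q := by
    rw [hQdef]
    exact Nat.le_floor (by rw [Nat.cast_one]; exact (one_le_div hM0).mpr huM)
  have hQM : ((Q : ℝ) * M) ≤ u := by
    have h1 : (Q : ℝ) ≤ u / M := Nat.floor_le (by positivity)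
    calc (Q : ℝ) * M ≤ (u / M) * M := by gcongr
    _ = u := div_mul_cancel₀ u (ne_of_gt hM0)
  have hQMN : ((Q : ℝ) * M) ^ ℓ ≤ N := by
    rw [← huℓ]; exact pow_le_pow_left₀ (by positivity) hQM ℓ
  have hNQM : N < (2 * (Q : ℝ) * M) ^ ℓ := by
    have h1 : u / M < (Q : ℝ) + 1 := Nat.lt_floor_add_one _
    have h2 : u < ((Q : ℝ) + 1) * M := by
      rw [div_lt_iff₀ hM0] at h1; exact h1
    have h3 : ((Q : ℝ) + 1) * M ≤ 2 * Q * M := by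
      have : (1 : ℝ) ≤ Q := by exact_mod_cast hQ1
      nlinarith
    rw [← huℓ]
    exact pow_lt_pow_left₀ (lt_of_lt_of_le h2 h3) hu0.le hℓ0
  set P : ℕ := Q ^ ℓ * M ^ (ℓ - 1) with hPdef
  have hPreal : (P : ℝ) = (Q : ℝ) ^ ℓ * (M : ℝ) ^ (ℓ - 1) := by
    rw [hPdef]; push_cast; ring
  have hPMreal : (P : ℝ) * M = ((Q : ℝ) * M) ^ ℓ := by
    rw [hPreal, mul_pow, mul_assoc, ← pow_succ, Nat.sub_add_cancel hℓ1]
  have hPN : N / (2 ^ ℓ * M) ≤ (P : ℝ) := by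
    rw [div_le_iff₀ (by positivity)]
    calc N ≤ (2 * (Q : ℝ) * M) ^ ℓ := hNQM.le
    _ = 2 ^ ℓ * ((Q : ℝ) * M) ^ ℓ := by rw [mul_assoc, mul_pow]
    _ = (P : ℝ) * (2 ^ ℓ * M) := by rw [← hPMreal]; ring
  -- the combinatorial sets
  set al := ∑ k ∈ Finset.range (K + 1), ε k / ((E k : ℝ) + 1) with hal
  haveI instG : DecidablePred
      (fun t => ∀ k ∈ Finset.range (K + 1), r ℓ ℓ (m + t * M + k) ≤ E k) :=
    fun _ => Finset.decidableDforallFinset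
  haveI instB : ∀ k, DecidablePred (fun t => E k < r ℓ ℓ (m + t * M + k)) :=
    fun k t => Nat.decLt _ _
  set Good := (Finset.range P).filter
    (fun t => ∀ k ∈ Finset.range (K + 1), r ℓ ℓ (m + t * M + k) ≤ E k) with hGooddef
  set Bad := fun k => (Finset.range P).filter
    (fun t => E k < r ℓ ℓ (m + t * M + k)) with hBaddef
  have hcover : Finset.range P ⊆ Good ∪ (Finset.range (K + 1)).biUnion Bad := by
    intro t ht
    by_cases h : ∀ k ∈ Finset.range (K + 1), r ℓ ℓ (m + t * M + k) ≤ E k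
    · exact Finset.mem_union_left _ (Finset.mem_filter.mpr ⟨ht, h⟩)
    · push_neg at h
      obtain ⟨k, hk1, hk2⟩ := h
      exact Finset.mem_union_right _
        (Finset.mem_biUnion.mpr ⟨k, hk1, Finset.mem_filter.mpr ⟨ht, hk2⟩⟩)
  have hcardP : P ≤ Good.card + ∑ k ∈ Finset.range (K + 1), (Bad k).card := by
    calc P = (Finset.range P).card := (Finset.card_range P).symm
    _ ≤ (Good ∪ (Finset.range (K + 1)).biUnion Bad).card := Finset.card_le_card hcover
    _ ≤ Good.card + ((Finset.range (K + 1)).biUnion Bad).card := Finset.card_union_le _ _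
    _ ≤ Good.card + ∑ k ∈ Finset.range (K + 1), (Bad k).card :=
        add_le_add_right Finset.card_biUnion_le _
  have hbadk : ∀ k ∈ Finset.range (K + 1),
      ((Bad k).card : ℝ) ≤ (P : ℝ) * (ε k / ((E k : ℝ) + 1)) := by
    intro k hk
    rw [Finset.mem_range, Nat.lt_succ_iff] at hk
    have hnat : (Bad k).card * (E k + 1) ≤ Q ^ ℓ * rmod ℓ ((m : ℤ) + (k : ℤ)) M := by
      calc (Bad k).card * (E k + 1) = ∑ _t ∈ Bad k, (E k + 1) := by
            rw [Finset.sum_const, smul_eq_mul]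
      _ ≤ ∑ t ∈ Bad k, r ℓ ℓ (m + t * M + k) :=
            Finset.sum_le_sum (fun t ht => (Finset.mem_filter.mp ht).2)
      _ ≤ ∑ t ∈ Finset.range P, r ℓ ℓ (m + t * M + k) :=
            Finset.sum_le_sum_of_subset (Finset.filter_subset _ _)
      _ ≤ _ := key_count ℓ Q M m k hℓ0 hM (by omega)
    have hreal : ((Bad k).card : ℝ) * ((E k : ℝ) + 1) ≤ (Q : ℝ) ^ ℓ * (ε k * (M : ℝ) ^ (ℓ - 1)) := by
      calc ((Bad k).card : ℝ) * ((E k : ℝ) + 1)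
          ≤ (Q : ℝ) ^ ℓ * (rmod ℓ ((m : ℤ) + (k : ℤ)) M : ℝ) := by exact_mod_cast hnat
      _ ≤ _ := mul_le_mul_of_nonneg_left (hεr k hk) (by positivity)
    have hE : (0 : ℝ) < (E k : ℝ) + 1 := by positivity
    rw [← le_div_iff₀ hE] at hreal
    calc ((Bad k).card : ℝ) ≤ (Q : ℝ) ^ ℓ * (ε k * (M : ℝ) ^ (ℓ - 1)) / ((E k : ℝ) + 1) := hreal
    _ = (P : ℝ) * (ε k / ((E k : ℝ) + 1)) := by rw [hPreal]; ring
  have hGoodcard : (1 - al) * (P : ℝ) ≤ (Good.card : ℝ) := by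
    have h1 : ∑ k ∈ Finset.range (K + 1), ((Bad k).card : ℝ) ≤ (P : ℝ) * al := by
      rw [hal, Finset.mul_sum]
      exact Finset.sum_le_sum hbadk
    have h2 : (P : ℝ) ≤ (Good.card : ℝ) + ∑ k ∈ Finset.range (K + 1), ((Bad k).card : ℝ) := by
      exact_mod_cast hcardP
    nlinarith
  -- finiteness of the target set
  set S : Set ℕ := {n : ℕ | (n : ℝ) < N - (K : ℝ) ∧ n ≡ m [MOD M] ∧
    ∀ k ≤ K, r ℓ ℓ (n + k) ≤ E k} with hSdef
  have hSfin : S.Finite := by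
    apply Set.Finite.subset (Set.finite_Iio ⌈N⌉₊)
    intro n hn
    rw [hSdef, Set.mem_setOf_eq] at hn
    rw [Set.mem_Iio, Nat.lt_ceil]
    have hK0 : (0 : ℝ) ≤ (K : ℝ) := Nat.cast_nonneg K
    linarith [hn.1]
  have hinj : Good.card ≤ Nat.card S := by
    rw [Nat.card_coe_set_eq, Set.ncard_eq_toFinset_card S hSfin]
    apply Finset.card_le_card_of_injOn (fun t => m + t * M)
    · intro t ht
      rw [Finset.mem_coe, hGooddef, Finset.mem_filter, Finset.mem_range] at ht
      rw [Finset.mem_coe, Set.Finite.mem_toFinset, hSdef, Set.mem_setOf_eq]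
      refine ⟨?_, ?_, ?_⟩
      · have h1 : m + t * M + K < P * M := by
          calc m + t * M + K < t * M + M := by omega
          _ = (t + 1) * M := by ring
          _ ≤ P * M := Nat.mul_le_mul_right _ ht.1
        have h2 : ((m : ℝ) + (t : ℝ) * M + K) < (P : ℝ) * M := by exact_mod_cast h1
        rw [hPMreal] at h2
        push_cast
        linarith [hQMN]
      · show (m + t * M) % M = m % M
        exact Nat.add_mul_mod_self_right m t M
      · intro k hk
        exact ht.2 k (Finset.mem_range.mpr (by omega))
    · intro a ha b hb hab
      simp only at hab
      have h1 : a * M = b * M := by omega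
      exact Nat.eq_of_mul_eq_mul_right (by omega) h1
  -- conclude
  calc (1 - al) / 2 ^ ℓ * (N / M) = (1 - al) * (N / (2 ^ ℓ * M)) := by ring
  _ ≤ (1 - al) * (P : ℝ) := mul_le_mul_of_nonneg_left hPN (by linarith)
  _ ≤ (Good.card : ℝ) := hGoodcard
  _ ≤ (Nat.card S : ℝ) := by exact_mod_cast hinj
end

section
/- Let q ≥ 2 be an integer and let f(z) = Σ_{n∈ℕ} a_n zⁿ and g(z) = Σ_{n∈ℕ} b_n zⁿ be ½-functions. Suppose there are positive integers K₁ ≤ K₂ < K′, indices n′ ≤ n₁ < n₂ in ℕ, real numbers E, E′ > 0 and some H > 0 satisfying: (i) n₁ + K₁ < n₂ and n₂ + K₂ ≤ n′ + K′; (ii) n₁ and n₂ are mild gap points for f with gap-length ≥ K₁ and K₁-tail-norm ≤ E, and n′ is a mild gap point for g with gap-length ≥ K′ and K′-tail-norm ≤ E′; (iii) Σ_{n=n₁}^{n₂−1} a_n q^{−n} ≠ 0; (iv) q^{K₁} > H·E and q^{K₂} > H·E′. Then for all integers α, β with α ≠ 0 and |α| + |β| ≤ H one has |α·f(1/q) +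 β·g(1/q)| ≥ q^{−n₂}. -/
lemma halfFun_summable (q : ℕ) (hq : 2 ≤ q) (a : ℕ → ℤ) (ha : IsHalfFunction a) :
    Summable (fun n : ℕ => (a n : ℝ) / (q : ℝ) ^ n) := by
  have hq2 : (2:ℝ) ≤ (q:ℝ) := by exact_mod_cast hq
  apply Summable.of_abs
  apply Summable.of_nonneg_of_le (fun n => abs_nonneg _) _ ha
  intro n
  rw [abs_div, abs_pow, abs_of_nonneg (by positivity : (0:ℝ) ≤ (q:ℝ)),
      div_pow, one_pow, one_div, div_eq_mul_inv]
  exact mul_le_mul_of_nonneg_left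
    (inv_anti₀ (by positivity) (pow_le_pow_left₀ (by norm_num) hq2 n)) (abs_nonneg _)

lemma tail_bound (q : ℕ) (hq : 2 ≤ q) (a : ℕ → ℤ) (ha : IsHalfFunction a)
    (m : ℕ) (E : ℝ) (hE : ∑' i : ℕ, |(a (m + i) : ℝ)| * (1/2:ℝ)^i ≤ E) :
    |∑' i : ℕ, (a (m + i) : ℝ) / (q:ℝ)^(m+i)| ≤ E * ((q:ℝ)^m)⁻¹ := by
  have hq2 : (2:ℝ) ≤ (q:ℝ) := by exact_mod_cast hq
  have hq0 : (0:ℝ) < (q:ℝ) := by linarith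
  have h0 : Summable (fun i : ℕ => |(a (i+m):ℝ)| * (1/2:ℝ)^(i+m)) :=
    (summable_nat_add_iff m).mpr ha
  have hs1 : Summable (fun i : ℕ => |(a (m+i):ℝ)| * (1/2:ℝ)^i) := by
    have h1 := h0.mul_left ((2:ℝ)^m)
    refine h1.congr fun i => ?_
    show (2:ℝ)^m * (|(a (i+m):ℝ)| * (1/2:ℝ)^(i+m)) = |(a (m+i):ℝ)| * (1/2:ℝ)^i
    have h2 : (2:ℝ)^m * (1/2:ℝ)^m = 1 := by rw [← mul_pow]; norm_num
    rw [add_comm i m, pow_add]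
    calc (2:ℝ)^m * (|(a (m+i):ℝ)| * ((1/2:ℝ)^m * (1/2:ℝ)^i))
        = ((2:ℝ)^m * (1/2:ℝ)^m) * (|(a (m+i):ℝ)| * (1/2:ℝ)^i) := by ring
      _ = |(a (m+i):ℝ)| * (1/2:ℝ)^i := by rw [h2, one_mul]
  have hs2 : Summable (fun i : ℕ => (a (m+i):ℝ)/(q:ℝ)^(m+i)) := by
    have := (summable_nat_add_iff (f := fun n : ℕ => (a n:ℝ)/(q:ℝ)^n) m).mpr
      (halfFun_summable q hq a ha)
    exact this.congr fun i => by rw [add_comm i m]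
  have hs3 : Summable (fun i : ℕ => |(a (m+i):ℝ)| / (q:ℝ)^(m+i)) := by
    have := hs2.abs
    refine this.congr fun i => ?_
    rw [abs_div, abs_pow, abs_of_nonneg hq0.le]
  calc |∑' i : ℕ, (a (m + i) : ℝ) / (q:ℝ)^(m+i)|
      ≤ ∑' i : ℕ, |(a (m + i) : ℝ)| / (q:ℝ)^(m+i) := by
        have := norm_tsum_le_tsum_norm (f := fun i : ℕ => (a (m+i):ℝ)/(q:ℝ)^(m+i))
          (by simpa [Real.norm_eq_abs, abs_div, abs_of_nonneg hq0.le] using hs3)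
        simpa [Real.norm_eq_abs, abs_div, abs_of_nonneg hq0.le] using this
    _ ≤ ∑' i : ℕ, ((q:ℝ)^m)⁻¹ * (|(a (m+i):ℝ)| * (1/2:ℝ)^i) := by
        apply Summable.tsum_le_tsum _ hs3 (hs1.mul_left _)
        intro i
        have hle : ((q:ℝ)^i)⁻¹ ≤ (1/2:ℝ)^i := by
          rw [div_pow, one_pow, one_div]
          exact inv_anti₀ (by positivity) (pow_le_pow_left₀ (by norm_num) hq2 i)
        rw [pow_add, div_eq_mul_inv, mul_inv]
        calc |(a (m+i):ℝ)| * (((q:ℝ)^m)⁻¹ * ((q:ℝ)^i)⁻¹)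
            = ((q:ℝ)^m)⁻¹ * (|(a (m+i):ℝ)| * ((q:ℝ)^i)⁻¹) := by ring
          _ ≤ ((q:ℝ)^m)⁻¹ * (|(a (m+i):ℝ)| * (1/2:ℝ)^i) := by
              exact mul_le_mul_of_nonneg_left
                (mul_le_mul_of_nonneg_left hle (abs_nonneg _)) (by positivity)
    _ = ((q:ℝ)^m)⁻¹ * ∑' i : ℕ, |(a (m+i):ℝ)| * (1/2:ℝ)^i := tsum_mul_left
    _ ≤ ((q:ℝ)^m)⁻¹ * E := mul_le_mul_of_nonneg_left hE (by positivity)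
    _ = E * ((q:ℝ)^m)⁻¹ := by ring

lemma aux_int_lb (q : ℕ) (hq : 2 ≤ q) (c : ℕ → ℤ) (m N : ℕ)
    (hS : ∑ n ∈ Finset.Ico m (N+1), (c n : ℝ) / (q:ℝ)^n ≠ 0) :
    ((q:ℝ)^N)⁻¹ ≤ |∑ n ∈ Finset.Ico m (N+1), (c n : ℝ) / (q:ℝ)^n| := by
  have hq0 : (0:ℝ) < (q:ℝ) := by
    have : (2:ℝ) ≤ (q:ℝ) := by exact_mod_cast hq
    linarith
  have hqN : (0:ℝ) < (q:ℝ)^N := pow_pos hq0 N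
  set S := ∑ n ∈ Finset.Ico m (N+1), (c n : ℝ) / (q:ℝ)^n with hSdef
  have key : ((∑ n ∈ Finset.Ico m (N+1), c n * (q:ℤ)^(N-n) : ℤ) : ℝ) = (q:ℝ)^N * S := by
    push_cast
    rw [Finset.mul_sum]
    refine Finset.sum_congr rfl fun n hn => ?_
    have hn' : n ≤ N := by have := (Finset.mem_Ico.mp hn).2; omega
    have hsplit : (q:ℝ)^N = (q:ℝ)^(N-n) * (q:ℝ)^n := by
      rw [← pow_add]; congr 1; omega
    rw [hsplit]
    field_simp
  have hT : (∑ n ∈ Finset.Ico m (N+1), c n * (q:ℤ)^(N-n) : ℤ) ≠ 0 := by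
    intro h
    rw [h, Int.cast_zero] at key
    rcases mul_eq_zero.mp key.symm with h' | h'
    · exact absurd h' (by positivity)
    · exact hS h'
  have h1 : (1:ℝ) ≤ |((∑ n ∈ Finset.Ico m (N+1), c n * (q:ℤ)^(N-n) : ℤ) : ℝ)| := by
    rw [← Int.cast_abs]
    exact_mod_cast Int.one_le_abs hT
  rw [key, abs_mul, abs_of_pos hqN] at h1
  rw [inv_le_iff_one_le_mul₀ hqN]
  linarith

lemma tsum_shift_zero {f : ℕ → ℝ} (hf : Summable f) (m K : ℕ)
    (h0 : ∀ k < K, f (m + k) = 0) :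
    ∑' i : ℕ, f (m + i) = ∑' i : ℕ, f (m + K + i) := by
  have hg : Summable (fun i => f (m + i)) := by
    have := (summable_nat_add_iff m).mpr hf
    exact this.congr fun i => by rw [add_comm]
  have hs := Summable.sum_add_tsum_nat_add K hg
  rw [show (∑ i ∈ Finset.range K, f (m + i)) = 0 from
    Finset.sum_eq_zero (fun k hk => h0 k (Finset.mem_range.mp hk)), zero_add] at hs
  rw [← hs]
  exact tsum_congr fun i => by congr 1; omega

lemma combo_lt (A B u v H : ℝ) (hA : 1 ≤ A) (hB : 0 ≤ B)
    (hH : 0 < H) (h1 : H * u < 1) (h2 : H * v < 1) (hAB : A + B ≤ H) :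
    A * u + B * v < 1 := by
  nlinarith [mul_lt_mul_of_pos_left h1 (by linarith : (0:ℝ) < A),
    mul_le_mul_of_nonneg_left h2.le hB]

lemma tail_est (q : ℕ) (hq : 2 ≤ q) (a : ℕ → ℤ) (ha : IsHalfFunction a)
    (m K : ℕ) (E : ℝ)
    (h0 : ∀ k < K, a (m + k) = 0)
    (hE : ∑' i : ℕ, |(a (m + K + i) : ℝ)| * (1/2:ℝ)^i ≤ E) :
    |∑' i : ℕ, (a (m + i) : ℝ) / (q:ℝ)^(m + i)| ≤ E * ((q:ℝ)^(m+K))⁻¹ := by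
  have hsum : Summable (fun n : ℕ => (a n:ℝ)/(q:ℝ)^n) := halfFun_summable q hq a ha
  have key : (∑' i : ℕ, (a (m + i) : ℝ) / (q:ℝ)^(m + i))
      = ∑' i : ℕ, (a (m + K + i) : ℝ) / (q:ℝ)^(m + K + i) :=
    tsum_shift_zero (f := fun n => (a n:ℝ)/(q:ℝ)^n) hsum m K
      (fun k hk => by
        show (a (m + k):ℝ)/(q:ℝ)^(m+k) = 0
        rw [h0 k hk]; simp)
  rw [key]
  exact tail_bound q hq a ha (m+K) E hE

lemma split_at (q : ℕ) (hq : 2 ≤ q) (c : ℕ → ℤ) (hc : IsHalfFunction c) (m : ℕ) :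
    halfFunValue c q
      = ∑ n ∈ Finset.Ico 0 m, (c n:ℝ)/(q:ℝ)^n + ∑' i : ℕ, (c (m+i):ℝ)/(q:ℝ)^(m+i) := by
  have hsum : Summable (fun n : ℕ => (c n:ℝ)/(q:ℝ)^n) := halfFun_summable q hq c hc
  have h := Summable.sum_add_tsum_nat_add (f := fun n : ℕ => (c n:ℝ)/(q:ℝ)^n) m hsum
  rw [halfFunValue, ← h, Finset.range_eq_Ico]
  congr 1
  exact tsum_congr fun i => by rw [add_comm m i]

lemma lower_bound_combine (u t v w : ℝ) (h2w : 2*w ≤ v) (hv : v ≤ |u|) (ht : |t| < w) :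
    w ≤ |u + t| := by
  have h := abs_sub_abs_le_abs_sub u (-t)
  rw [abs_neg, sub_neg_eq_add] at h
  linarith

/-- Quantitative nested gaps principle: a measure of linear independence for
the values of two `½`-functions at `1/q`. -/
theorem nested_gaps_measure (q : ℕ) (hq : 2 ≤ q) (a b : ℕ → ℤ)
    (ha : IsHalfFunction a) (hb : IsHalfFunction b)
    (K₁ K₂ K' : ℕ) (hK₁ : 0 < K₁) (hK₁₂ : K₁ ≤ K₂) (hK₂' : K₂ < K')
    (n' n₁ n₂ : ℕ) (hn'₁ : n' ≤ n₁) (hn₁₂ : n₁ < n₂)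
    (E E' : ℝ) (hE : 0 < E) (hE' : 0 < E') (H : ℝ) (hH : 0 < H)
    (h1 : n₁ + K₁ < n₂) (h1' : n₂ + K₂ ≤ n' + K')
    (h2 : IsMildGapPoint a K₁ E n₁) (h2' : IsMildGapPoint a K₁ E n₂)
    (h2'' : IsMildGapPoint b K' E' n')
    (h3 : ∑ n ∈ Finset.Ico n₁ n₂, (a n : ℝ) / (q : ℝ) ^ n ≠ 0)
    (h4 : (q : ℝ) ^ K₁ > H * E) (h4' : (q : ℝ) ^ K₂ > H * E')
    (α β : ℤ) (hα : α ≠ 0) (hαβ : ((|α| + |β| : ℤ) : ℝ) ≤ H) :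
    ((q : ℝ) ^ n₂)⁻¹ ≤ |(α : ℝ) * halfFunValue a q + (β : ℝ) * halfFunValue b q| := by
  have hq2 : (2:ℝ) ≤ (q:ℝ) := by exact_mod_cast hq
  have hq0 : (0:ℝ) < (q:ℝ) := by linarith
  have hpow : ∀ m : ℕ, (0:ℝ) < (q:ℝ)^m := fun m => pow_pos hq0 m
  have hmono : ∀ m k : ℕ, m ≤ k → ((q:ℝ)^k)⁻¹ ≤ ((q:ℝ)^m)⁻¹ := fun m k h =>
    inv_anti₀ (hpow m) (pow_le_pow_right₀ (by linarith) h)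
  have hA1 : (1:ℝ) ≤ |(α:ℝ)| := by
    rw [← Int.cast_abs]; exact_mod_cast Int.one_le_abs hα
  have hB0 : (0:ℝ) ≤ |(β:ℝ)| := abs_nonneg _
  have hAB : |(α:ℝ)| + |(β:ℝ)| ≤ H := by push_cast at hαβ; exact hαβ
  have hbz : ∀ n, n' ≤ n → n < n' + K' → b n = 0 := by
    intro n hn1 hn2
    have := h2''.1 (n - n') (by omega)
    rwa [Nat.add_sub_cancel' hn1] at this
  have hu : H * (E * ((q:ℝ)^K₁)⁻¹) < 1 := by
    have h := (div_lt_one (hpow K₁)).mpr h4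
    calc H * (E * ((q:ℝ)^K₁)⁻¹) = (H*E)/(q:ℝ)^K₁ := by ring
      _ < 1 := h
  have hv : H * (E' * ((q:ℝ)^K₂)⁻¹) < 1 := by
    have h := (div_lt_one (hpow K₂)).mpr h4'
    calc H * (E' * ((q:ℝ)^K₂)⁻¹) = (H*E')/(q:ℝ)^K₂ := by ring
      _ < 1 := h
  have hcombo : |(α:ℝ)| * (E * ((q:ℝ)^K₁)⁻¹) + |(β:ℝ)| * (E' * ((q:ℝ)^K₂)⁻¹) < 1 :=
    combo_lt _ _ _ _ H hA1 hB0 hH hu hv hAB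
  -- tail estimate at a cut level L
  have tailLt : ∀ L : ℕ, n' ≤ L → n₁ ≤ L → L ≤ n₂ → (∀ k < K₁, a (L + k) = 0) →
      (∑' i : ℕ, |(a (L + K₁ + i) : ℝ)| * (1/2:ℝ)^i ≤ E) →
      |(α:ℝ) * ∑' i : ℕ, (a (L+i):ℝ)/(q:ℝ)^(L+i)
        + (β:ℝ) * ∑' i : ℕ, (b (L+i):ℝ)/(q:ℝ)^(L+i)| < ((q:ℝ)^L)⁻¹ := by
    intro L hL0 hL1 hL2 hgap htail
    have hTa : |∑' i : ℕ, (a (L+i):ℝ)/(q:ℝ)^(L+i)| ≤ E * ((q:ℝ)^(L+K₁))⁻¹ :=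
      tail_est q hq a ha L K₁ E hgap htail
    have hLe : L ≤ n' + K' := by omega
    have hTb : |∑' i : ℕ, (b (L+i):ℝ)/(q:ℝ)^(L+i)| ≤ E' * ((q:ℝ)^(n'+K'))⁻¹ := by
      have h0 : ∀ k < (n' + K' - L), b (L + k) = 0 := fun k hk => hbz _ (by omega) (by omega)
      have hEb : ∑' i : ℕ, |(b (L + (n'+K'-L) + i):ℝ)| * (1/2:ℝ)^i ≤ E' := by
        rw [show L + (n'+K'-L) = n'+K' by omega]
        exact h2''.2
      have := tail_est q hq b hb L (n'+K'-L) E' h0 hEb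
      rwa [show L + (n'+K'-L) = n'+K' by omega] at this
    have hTb' : |∑' i : ℕ, (b (L+i):ℝ)/(q:ℝ)^(L+i)| ≤ E' * ((q:ℝ)^(n₂+K₂))⁻¹ :=
      hTb.trans (mul_le_mul_of_nonneg_left (hmono _ _ h1') hE'.le)
    have e1 : E * ((q:ℝ)^(L+K₁))⁻¹ = (E * ((q:ℝ)^K₁)⁻¹) * ((q:ℝ)^L)⁻¹ := by
      rw [pow_add, mul_inv]; ring
    have e2 : E' * ((q:ℝ)^(n₂+K₂))⁻¹ ≤ (E' * ((q:ℝ)^K₂)⁻¹) * ((q:ℝ)^L)⁻¹ := by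
      rw [pow_add, mul_inv]
      have h := hmono L n₂ hL2
      calc E' * (((q:ℝ)^n₂)⁻¹ * ((q:ℝ)^K₂)⁻¹)
          = (E' * ((q:ℝ)^K₂)⁻¹) * ((q:ℝ)^n₂)⁻¹ := by ring
        _ ≤ (E' * ((q:ℝ)^K₂)⁻¹) * ((q:ℝ)^L)⁻¹ :=
            mul_le_mul_of_nonneg_left h (by positivity)
    calc |(α:ℝ) * ∑' i : ℕ, (a (L+i):ℝ)/(q:ℝ)^(L+i)
        + (β:ℝ) * ∑' i : ℕ, (b (L+i):ℝ)/(q:ℝ)^(L+i)|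
        ≤ |(α:ℝ)| * |∑' i : ℕ, (a (L+i):ℝ)/(q:ℝ)^(L+i)|
          + |(β:ℝ)| * |∑' i : ℕ, (b (L+i):ℝ)/(q:ℝ)^(L+i)| := by
          refine (abs_add_le _ _).trans ?_
          rw [abs_mul, abs_mul]
      _ ≤ |(α:ℝ)| * (E * ((q:ℝ)^(L+K₁))⁻¹) + |(β:ℝ)| * (E' * ((q:ℝ)^(n₂+K₂))⁻¹) := by
          have ha' := mul_le_mul_of_nonneg_left hTa (by linarith : (0:ℝ) ≤ |(α:ℝ)|)
          have hb' := mul_le_mul_of_nonneg_left hTb' hB0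
          linarith
      _ ≤ (|(α:ℝ)| * (E * ((q:ℝ)^K₁)⁻¹) + |(β:ℝ)| * (E' * ((q:ℝ)^K₂)⁻¹)) * ((q:ℝ)^L)⁻¹ := by
          rw [e1]
          have h2b := mul_le_mul_of_nonneg_left e2 hB0
          calc |(α:ℝ)| * ((E * ((q:ℝ)^K₁)⁻¹) * ((q:ℝ)^L)⁻¹) + |(β:ℝ)| * (E' * ((q:ℝ)^(n₂+K₂))⁻¹)
              ≤ |(α:ℝ)| * ((E * ((q:ℝ)^K₁)⁻¹) * ((q:ℝ)^L)⁻¹)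
                + |(β:ℝ)| * ((E' * ((q:ℝ)^K₂)⁻¹) * ((q:ℝ)^L)⁻¹) := by linarith
            _ = (|(α:ℝ)| * (E * ((q:ℝ)^K₁)⁻¹) + |(β:ℝ)| * (E' * ((q:ℝ)^K₂)⁻¹)) * ((q:ℝ)^L)⁻¹ := by
                ring
      _ < 1 * ((q:ℝ)^L)⁻¹ := mul_lt_mul_of_pos_right hcombo (by positivity)
      _ = ((q:ℝ)^L)⁻¹ := one_mul _
  have hFa1 := split_at q hq a ha n₁
  have hFb1 := split_at q hq b hb n₁
  have hFa2 := split_at q hq a ha n₂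
  have hFb2 := split_at q hq b hb n₂
  by_cases hR : (α:ℝ) * ∑ n ∈ Finset.Ico 0 n₁, (a n:ℝ)/(q:ℝ)^n
      + (β:ℝ) * ∑ n ∈ Finset.Ico 0 n₁, (b n:ℝ)/(q:ℝ)^n = 0
  · -- head at n₁ vanishes; use the middle block of a on [n₁, n₂)
    have hPb0 : ∑ n ∈ Finset.Ico n₁ n₂, (b n:ℝ)/(q:ℝ)^n = 0 := by
      apply Finset.sum_eq_zero
      intro n hn
      obtain ⟨hn1, hn2⟩ := Finset.mem_Ico.mp hn
      rw [hbz n (by omega) (by omega)]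
      simp
    have hsa_split : ∑ n ∈ Finset.Ico 0 n₂, (a n:ℝ)/(q:ℝ)^n
        = ∑ n ∈ Finset.Ico 0 n₁, (a n:ℝ)/(q:ℝ)^n + ∑ n ∈ Finset.Ico n₁ n₂, (a n:ℝ)/(q:ℝ)^n :=
      (Finset.sum_Ico_consecutive _ (Nat.zero_le n₁) hn₁₂.le).symm
    have hsb_split : ∑ n ∈ Finset.Ico 0 n₂, (b n:ℝ)/(q:ℝ)^n
        = ∑ n ∈ Finset.Ico 0 n₁, (b n:ℝ)/(q:ℝ)^n + ∑ n ∈ Finset.Ico n₁ n₂, (b n:ℝ)/(q:ℝ)^n :=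
      (Finset.sum_Ico_consecutive _ (Nat.zero_le n₁) hn₁₂.le).symm
    have hxeq : (α:ℝ) * halfFunValue a q + (β:ℝ) * halfFunValue b q
        = ((α:ℝ) * ∑ n ∈ Finset.Ico n₁ n₂, (a n:ℝ)/(q:ℝ)^n)
          + ((α:ℝ) * ∑' i : ℕ, (a (n₂+i):ℝ)/(q:ℝ)^(n₂+i)
            + (β:ℝ) * ∑' i : ℕ, (b (n₂+i):ℝ)/(q:ℝ)^(n₂+i)) := by
      rw [hFa2, hFb2, hsa_split, hsb_split, hPb0]
      linear_combination hR
    have hn₂pos : 1 ≤ n₂ := by omega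
    have e1 : n₂ - 1 + 1 = n₂ := by omega
    have hrw : ∑ n ∈ Finset.Ico n₁ n₂, ((α * a n : ℤ):ℝ)/(q:ℝ)^n
        = (α:ℝ) * ∑ n ∈ Finset.Ico n₁ n₂, (a n:ℝ)/(q:ℝ)^n := by
      rw [Finset.mul_sum]
      exact Finset.sum_congr rfl fun n _ => by push_cast; ring
    have hαM : ((q:ℝ)^(n₂-1))⁻¹ ≤ |(α:ℝ) * ∑ n ∈ Finset.Ico n₁ n₂, (a n:ℝ)/(q:ℝ)^n| := by
      have hMne : ∑ n ∈ Finset.Ico n₁ ((n₂-1)+1), ((α * a n : ℤ):ℝ)/(q:ℝ)^n ≠ 0 := by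
        rw [e1, hrw]
        exact mul_ne_zero (by exact_mod_cast hα) h3
      have hlb := aux_int_lb q hq (fun n => α * a n) n₁ (n₂-1) hMne
      rw [e1, hrw] at hlb
      exact hlb
    have hTlt : |(α:ℝ) * ∑' i : ℕ, (a (n₂+i):ℝ)/(q:ℝ)^(n₂+i)
        + (β:ℝ) * ∑' i : ℕ, (b (n₂+i):ℝ)/(q:ℝ)^(n₂+i)| < ((q:ℝ)^n₂)⁻¹ :=
      tailLt n₂ (by omega) hn₁₂.le le_rfl h2'.1 h2'.2
    have h2inv : 2 * ((q:ℝ)^n₂)⁻¹ ≤ ((q:ℝ)^(n₂-1))⁻¹ := by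
      have hp : (q:ℝ)^n₂ = (q:ℝ)^(n₂-1) * q := by
        rw [← pow_succ]; congr 1; omega
      have hqe : (q:ℝ) * ((q:ℝ)^n₂)⁻¹ = ((q:ℝ)^(n₂-1))⁻¹ := by
        rw [hp, mul_inv]
        field_simp
      rw [← hqe]
      exact mul_le_mul_of_nonneg_right hq2 (by positivity)
    rw [hxeq]
    exact lower_bound_combine _ _ _ _ h2inv hαM hTlt
  · -- head at n₁ does not vanish
    have hn₁pos : 1 ≤ n₁ := by
      by_contra h
      have hz : n₁ = 0 := by omega
      rw [hz] at hR
      simp at hR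
    have e1 : n₁ - 1 + 1 = n₁ := by omega
    have hrw : ∑ n ∈ Finset.Ico 0 n₁, ((α * a n + β * b n : ℤ):ℝ)/(q:ℝ)^n
        = (α:ℝ) * ∑ n ∈ Finset.Ico 0 n₁, (a n:ℝ)/(q:ℝ)^n
          + (β:ℝ) * ∑ n ∈ Finset.Ico 0 n₁, (b n:ℝ)/(q:ℝ)^n := by
      rw [Finset.mul_sum, Finset.mul_sum, ← Finset.sum_add_distrib]
      exact Finset.sum_congr rfl fun n _ => by push_cast; ring
    have hRlb : ((q:ℝ)^(n₁-1))⁻¹ ≤ |(α:ℝ) * ∑ n ∈ Finset.Ico 0 n₁, (a n:ℝ)/(q:ℝ)^n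
        + (β:ℝ) * ∑ n ∈ Finset.Ico 0 n₁, (b n:ℝ)/(q:ℝ)^n| := by
      have hne : ∑ n ∈ Finset.Ico 0 ((n₁-1)+1), ((α * a n + β * b n : ℤ):ℝ)/(q:ℝ)^n ≠ 0 := by
        rw [e1, hrw]; exact hR
      have hlb := aux_int_lb q hq (fun n => α * a n + β * b n) 0 (n₁-1) hne
      rw [e1, hrw] at hlb
      exact hlb
    have hxeq : (α:ℝ) * halfFunValue a q + (β:ℝ) * halfFunValue b q
        = ((α:ℝ) * ∑ n ∈ Finset.Ico 0 n₁, (a n:ℝ)/(q:ℝ)^n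
            + (β:ℝ) * ∑ n ∈ Finset.Ico 0 n₁, (b n:ℝ)/(q:ℝ)^n)
          + ((α:ℝ) * ∑' i : ℕ, (a (n₁+i):ℝ)/(q:ℝ)^(n₁+i)
            + (β:ℝ) * ∑' i : ℕ, (b (n₁+i):ℝ)/(q:ℝ)^(n₁+i)) := by
      rw [hFa1, hFb1]
      ring
    have hTlt : |(α:ℝ) * ∑' i : ℕ, (a (n₁+i):ℝ)/(q:ℝ)^(n₁+i)
        + (β:ℝ) * ∑' i : ℕ, (b (n₁+i):ℝ)/(q:ℝ)^(n₁+i)| < ((q:ℝ)^n₁)⁻¹ :=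
      tailLt n₁ (by omega) le_rfl hn₁₂.le h2.1 h2.2
    have h2inv : 2 * ((q:ℝ)^n₁)⁻¹ ≤ ((q:ℝ)^(n₁-1))⁻¹ := by
      have hp : (q:ℝ)^n₁ = (q:ℝ)^(n₁-1) * q := by
        rw [← pow_succ]; congr 1; omega
      have hqe : (q:ℝ) * ((q:ℝ)^n₁)⁻¹ = ((q:ℝ)^(n₁-1))⁻¹ := by
        rw [hp, mul_inv]
        field_simp
      rw [← hqe]
      exact mul_le_mul_of_nonneg_right hq2 (by positivity)
    rw [hxeq]
    exact le_trans (hmono n₁ n₂ hn₁₂.le)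
      (lower_bound_combine _ _ _ _ h2inv hRlb hTlt)
end
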